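/- Let T > 0, n ∈ ℕ, σ ∈ ℕ, U ⊆ {0,1}ⁿ, and p ∈ [1,∞). Define D_max^Σ(U) as the set of all u ∈ L^p((0,T);ℝⁿ) that have a representative v : (0,T) → ℝⁿ with v(t) ∈ U for all t ∈ (0,T) and Σ_{j=1}^n Var(v_j;(0,T)) ≤ σ, where Var denotes the pointwise total variation. Then D_max^Σ(U) is closed in L^p((0,T);ℝⁿ). -/

import Mathlib

/-!
Along a subsequence the chosen representatives converge a.e., hence pointwise on a set `S` of
full measure in `(0,T)`. On `S` the limit takes values in the closed set `U`, and its total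
variation on `S` is at most `σ` because variation is lower semicontinuous under pointwise
convergence. Distinct points of `U` are at sup-distance `≥ 1`, so finite variation forces the
limit to be constant on `S` just to the left of every `t`. As `S` is dense, redefining the limit
off `S` by these left values gives a representative of the limit with values in `U` whose
variation on `(0,T)` is no larger than on `S`.
-/

open MeasureTheory Set Filter
open scoped ENNReal Topology UniformConvergence

section eVariationOn

variable {α E : Type*} [LinearOrder α] [PseudoEMetricSpace E]

theorem eVariationOn_le_sum_eVariationOn_apply {κ : Type*} [Fintype κ] (f : α → κ → E)
    (s : Set α) : eVariationOn f s ≤ ∑ j, eVariationOn (fun x => f x j) s := by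
  refine iSup_le fun ⟨m, u, hu, us⟩ => ?_
  calc ∑ i ∈ Finset.range m, edist (f (u (i + 1))) (f (u i))
      ≤ ∑ i ∈ Finset.range m, ∑ j, edist (f (u (i + 1)) j) (f (u i) j) :=
        Finset.sum_le_sum fun i _ => edist_pi_le_iff.2 fun j =>
          Finset.single_le_sum (f := fun j => edist (f (u (i + 1)) j) (f (u i) j))
            (fun _ _ => zero_le) (Finset.mem_univ j)
    _ = ∑ j, ∑ i ∈ Finset.range m, edist (f (u (i + 1)) j) (f (u i) j) := Finset.sum_comm
    _ ≤ ∑ j, eVariationOn (fun x => f x j) s :=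
        Finset.sum_le_sum fun j _ => eVariationOn.sum_le hu us

-- `α →ᵤ[s.image singleton] _` carries the topology of pointwise convergence on `s`.
theorem lowerSemicontinuous_sum_eVariationOn_apply {κ : Type*} [Fintype κ] (s : Set α) :
    LowerSemicontinuous fun f : α →ᵤ[s.image singleton] (κ → E) =>
      ∑ j, eVariationOn (fun x => UniformOnFun.toFun (s.image singleton) f x j) s :=
  lowerSemicontinuous_sum fun j _ => (eVariationOn.lowerSemicontinuous (E := E) s).comp
    (UniformOnFun.postcomp_uniformContinuous
      (Pi.uniformContinuous_proj (fun _ : κ => E) j)).continuous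

theorem sum_eVariationOn_apply_le_of_tendsto {ι κ : Type*} [Fintype κ] {l : Filter ι} [l.NeBot]
    {F : ι → α → κ → E} {f : α → κ → E} {s : Set α}
    (hF : ∀ x ∈ s, Tendsto (fun i => F i x) l (𝓝 (f x))) {C : ℝ≥0∞}
    (hC : ∀ᶠ i in l, ∑ j, eVariationOn (fun x => F i x j) s ≤ C) :
    ∑ j, eVariationOn (fun x => f x j) s ≤ C := by
  have hlim : Tendsto (fun i => UniformOnFun.ofFun (s.image singleton) (F i)) l
      (𝓝 (UniformOnFun.ofFun _ f)) := by
    simpa [UniformOnFun.tendsto_iff_tendstoUniformlyOn, tendstoUniformlyOn_singleton_iff_tendsto]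
      using hF
  exact ((lowerSemicontinuous_sum_eVariationOn_apply s).isClosed_preimage C).mem_of_tendsto hlim hC

/-- Each jump between `δ`-separated values costs `δ`, so infinitely many jumps just left of `t`
would make the variation infinite. -/
theorem exists_lt_forall_eq_of_eVariationOn_ne_top [NoMinOrder α] {f : α → E} {S : Set α}
    (hf : eVariationOn f S ≠ ∞) {δ : ℝ≥0∞} (hδ : δ ≠ 0)
    (hsep : ∀ x ∈ S, ∀ y ∈ S, f x ≠ f y → δ ≤ edist (f x) (f y)) (t : α) :
    ∃ b < t, ∀ x ∈ S ∩ Ioo b t, ∀ y ∈ S ∩ Ioo b t, f x = f y := by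
  by_contra! hjump
  have key : ∀ m : ℕ, ∀ b < t, m * δ ≤ eVariationOn f (S ∩ Ioo b t) := by
    intro m
    induction m with
    | zero => simp
    | succ m ih =>
      intro b hb
      have step : ∀ x ∈ S ∩ Ioo b t, ∀ y ∈ S ∩ Ioo b t, x < y → f x ≠ f y →
          (m + 1 : ℕ) * δ ≤ eVariationOn f (S ∩ Ioo b t) := by
        intro x hx y hy hxy hne
        have hdisj : ∀ a ∈ S ∩ Ioc b y, ∀ c ∈ S ∩ Ioo y t, a ≤ c := fun a ha c hc =>
          ha.2.2.trans hc.2.1.le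
        calc ((m + 1 : ℕ) : ℝ≥0∞) * δ = δ + m * δ := by push_cast; ring
          _ ≤ eVariationOn f (S ∩ Ioc b y) + eVariationOn f (S ∩ Ioo y t) := by
            gcongr
            · exact (hsep x hx.1 y hy.1 hne).trans <| eVariationOn.edist_le f
                ⟨hx.1, hx.2.1, hxy.le⟩ ⟨hy.1, hy.2.1, le_rfl⟩
            · exact ih y hy.2.2
          _ ≤ eVariationOn f (S ∩ Ioc b y ∪ S ∩ Ioo y t) := eVariationOn.add_le_union f hdisj
          _ ≤ eVariationOn f (S ∩ Ioo b t) := eVariationOn.mono f <| union_subset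
              (fun a ha => ⟨ha.1, ha.2.1, ha.2.2.trans_lt hy.2.2⟩)
              (fun a ha => ⟨ha.1, hy.2.1.trans ha.2.1, ha.2.2⟩)
      obtain ⟨x, hx, y, hy, hne⟩ := hjump b hb
      rcases (ne_of_apply_ne f hne).lt_or_gt with hxy | hyx
      · exact step x hx y hy hxy hne
      · exact step y hy x hx hyx hne.symm
  obtain ⟨b, hb⟩ := exists_lt t
  obtain ⟨m, hm⟩ := ENNReal.exists_nat_mul_gt hδ hf
  exact (hm.trans_le ((key m b hb).trans (eVariationOn.mono f inter_subset_left))).false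

def AttainsFromLeft {β : Type*} (g : α → β) (S A : Set α) : Prop :=
  ∀ t ∈ A, ∀ b < t, ∃ s ∈ S, b < s ∧ s ≤ t ∧ g s = g t

theorem AttainsFromLeft.comp {β γ : Type*} {g : α → β} {S A : Set α} (hg : AttainsFromLeft g S A)
    (φ : β → γ) : AttainsFromLeft (φ ∘ g) S A := fun t ht b hb =>
  (hg t ht b hb).imp fun _ ⟨hs, hbs, hst, he⟩ => ⟨hs, hbs, hst, congrArg φ he⟩

theorem AttainsFromLeft.eVariationOn_le [NoMinOrder α] {f : α → E} {S A : Set α}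
    (hf : AttainsFromLeft f S A) : eVariationOn f A ≤ eVariationOn f S := by
  have : ∀ t b : α, ∃ s, t ∈ A → b < t → s ∈ S ∧ b < s ∧ s ≤ t ∧ f s = f t := by
    intro t b
    by_cases h : t ∈ A ∧ b < t
    · obtain ⟨s, hs⟩ := hf t h.1 b h.2
      exact ⟨s, fun _ _ => hs⟩
    · exact ⟨t, fun ht hb => (h ⟨ht, hb⟩).elim⟩
  choose g hg using this
  refine iSup_le fun ⟨m, u, hu, us⟩ => ?_
  obtain ⟨b, hb⟩ := exists_lt (u 0)
  let w : ℕ → α := fun k => Nat.rec (g (u 0) b)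
    (fun k wk => if u (k + 1) = u k then wk else g (u (k + 1)) (u k)) k
  have hw_succ : ∀ k, w (k + 1) = if u (k + 1) = u k then w k else g (u (k + 1)) (u k) :=
    fun _ => rfl
  have hw : ∀ k, w k ∈ S ∧ w k ≤ u k ∧ f (w k) = f (u k) := by
    intro k
    induction k with
    | zero => exact ⟨(hg _ _ (us 0) hb).1, (hg _ _ (us 0) hb).2.2⟩
    | succ k ih =>
      rw [hw_succ]
      split_ifs with h
      · rw [h]; exact ih
      · have := hg _ _ (us (k + 1)) ((hu k.le_succ).lt_of_ne' h)
        exact ⟨this.1, this.2.2⟩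
  have hw_mono : Monotone w := by
    refine monotone_nat_of_le_succ fun k => ?_
    rw [hw_succ]
    split_ifs with h
    · exact le_rfl
    · exact (hw k).2.1.trans (hg _ _ (us (k + 1)) ((hu k.le_succ).lt_of_ne' h)).2.1.le
  calc ∑ i ∈ Finset.range m, edist (f (u (i + 1))) (f (u i))
      = ∑ i ∈ Finset.range m, edist (f (w (i + 1))) (f (w i)) := by
        simp only [(hw _).2.2]
    _ ≤ eVariationOn f S := eVariationOn.sum_le hw_mono fun i => (hw i).1

theorem exists_eqOn_attainsFromLeft {β : Type*} {f : α → β} {S A : Set α}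
    (hS : ∀ t ∈ A, ∀ b < t, (S ∩ Ioo b t).Nonempty)
    (hf : ∀ t ∈ A, ∃ b < t, ∀ x ∈ S ∩ Ioo b t, ∀ y ∈ S ∩ Ioo b t, f x = f y) :
    ∃ g : α → β, EqOn g f S ∧ AttainsFromLeft g S A := by
  classical
  have : ∀ t, ∃ c : β, t ∈ A → ∃ b < t, ∀ x ∈ S ∩ Ioo b t, f x = c := by
    intro t
    by_cases ht : t ∈ A
    · obtain ⟨b, hb, hconst⟩ := hf t ht
      obtain ⟨s, hs⟩ := hS t ht b hb
      exact ⟨f s, fun _ => ⟨b, hb, fun x hx => hconst x hx s hs⟩⟩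
    · exact ⟨f t, fun h => (ht h).elim⟩
  choose c hc using this
  refine ⟨S.piecewise f c, piecewise_eqOn S f c, fun t ht b hb => ?_⟩
  by_cases htS : t ∈ S
  · exact ⟨t, htS, hb, le_rfl, rfl⟩
  obtain ⟨b', hb', hconst⟩ := hc t ht
  obtain ⟨s, hsS, hs⟩ := hS t ht (max b b') (max_lt hb hb')
  refine ⟨s, hsS, (le_max_left _ _).trans_lt hs.1, hs.2.le, ?_⟩
  rw [piecewise_eq_of_mem _ _ _ hsS, piecewise_eq_of_notMem _ _ _ htS]
  exact hconst s ⟨hsS, (le_max_right _ _).trans_lt hs.1, hs.2⟩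

end eVariationOn

theorem Set.finite_forall_eq_zero_or_eq_one {ι : Type*} [Finite ι] :
    {w : ι → ℝ | ∀ j, w j = 0 ∨ w j = 1}.Finite :=
  (Set.Finite.pi fun _ => ({0, 1} : Set ℝ).toFinite).subset fun _ hw j _ => hw j

theorem one_le_edist_of_forall_eq_zero_or_eq_one {ι : Type*} [Fintype ι] {w w' : ι → ℝ}
    (hw : ∀ j, w j = 0 ∨ w j = 1) (hw' : ∀ j, w' j = 0 ∨ w' j = 1) (hne : w ≠ w') :
    1 ≤ edist w w' := by
  obtain ⟨j, hj⟩ := Function.ne_iff.1 hne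
  refine le_trans ?_ (edist_le_pi_edist w w' j)
  rcases hw j with h | h <;> rcases hw' j with h' | h' <;> simp_all [edist_dist]

theorem exists_lt_mem_Ioo_of_ae {a c : ℝ} {P : ℝ → Prop}
    (hP : ∀ᵐ x ∂volume.restrict (Ioo a c), P x) {t : ℝ} (ht : t ∈ Ioo a c) {b : ℝ} (hb : b < t) :
    ∃ x ∈ Ioo a c, P x ∧ b < x ∧ x < t := by
  rw [ae_restrict_iff' measurableSet_Ioo] at hP
  obtain ⟨x, hxP, hx⟩ := (Measure.dense_of_ae hP).exists_between (max_lt hb ht.1)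
  have hxI : x ∈ Ioo a c := ⟨(le_max_right _ _).trans_lt hx.1, hx.2.trans ht.2⟩
  exact ⟨x, hxI, hxP hxI, (le_max_left _ _).trans_lt hx.1, hx.2⟩

theorem stmt_11
    (T : ℝ) (n : ℕ) (σ : ℕ)
    (U : Set (Fin n → ℝ)) (hU : ∀ w ∈ U, ∀ j, w j = 0 ∨ w j = 1)
    (p : ℝ≥0∞) [Fact (1 ≤ p)] :
    IsClosed {u : Lp (Fin n → ℝ) p (volume.restrict (Ioo (0:ℝ) T)) |
      ∃ v : ℝ → Fin n → ℝ,
        ((u : ℝ → Fin n → ℝ) =ᵐ[volume.restrict (Ioo (0:ℝ) T)] v) ∧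
        (∀ t ∈ Ioo (0:ℝ) T, v t ∈ U) ∧
        (∑ j : Fin n, eVariationOn (fun s => v s j) (Ioo (0:ℝ) T)) ≤ (σ : ℝ≥0∞)} := by
  have hU_closed : IsClosed U := (finite_forall_eq_zero_or_eq_one.subset hU).isClosed
  refine IsSeqClosed.isClosed fun u f hu hlim => ?_
  obtain ⟨ns, -, hae⟩ := (tendstoInMeasure_of_tendsto_Lp hlim).exists_seq_tendsto_ae
  choose v hv_ae hv_U hv_var using fun i => hu (ns i)
  set S := {t ∈ Ioo 0 T | Tendsto (fun i => v i t) atTop (𝓝 (f t))}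
  have hS_ae : ∀ᵐ t ∂volume.restrict (Ioo 0 T), Tendsto (fun i => v i t) atTop (𝓝 (f t)) := by
    filter_upwards [hae, ae_all_iff.2 hv_ae] with t ht hvt
    simpa only [hvt] using ht
  have hS_left : ∀ t ∈ Ioo 0 T, ∀ b < t, (S ∩ Ioo b t).Nonempty := fun t ht b hb => by
    obtain ⟨x, hxI, hx, hbx, hxt⟩ := exists_lt_mem_Ioo_of_ae hS_ae ht hb
    exact ⟨x, ⟨hxI, hx⟩, hbx, hxt⟩
  have hf_U : ∀ t ∈ S, f t ∈ U := fun t ht =>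
    hU_closed.mem_of_tendsto ht.2 (Eventually.of_forall fun i => hv_U i t ht.1)
  have hf_var : ∑ j, eVariationOn (fun s => f s j) S ≤ σ :=
    sum_eVariationOn_apply_le_of_tendsto (fun t ht => ht.2) <| Eventually.of_forall fun i =>
      (Finset.sum_le_sum fun j _ => eVariationOn.mono _ fun t ht => ht.1).trans (hv_var i)
  have hf_const : ∀ t ∈ Ioo 0 T, ∃ b < t, ∀ x ∈ S ∩ Ioo b t, ∀ y ∈ S ∩ Ioo b t, f x = f y :=
    fun t _ => exists_lt_forall_eq_of_eVariationOn_ne_top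
      ((eVariationOn_le_sum_eVariationOn_apply _ S).trans_lt
        (hf_var.trans_lt (ENNReal.natCast_lt_top σ))).ne one_ne_zero
      (fun x hx y hy => one_le_edist_of_forall_eq_zero_or_eq_one
        (hU _ (hf_U x hx)) (hU _ (hf_U y hy))) t
  obtain ⟨g, hgf, hg⟩ := exists_eqOn_attainsFromLeft hS_left hf_const
  refine ⟨g, ?_, fun t ht => ?_, ?_⟩
  · filter_upwards [hS_ae, ae_restrict_mem measurableSet_Ioo] with t ht hI
    exact (hgf ⟨hI, ht⟩).symm
  · obtain ⟨s, hs, -, -, hgs⟩ := hg t ht 0 ht.1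
    exact hgs ▸ hgf hs ▸ hf_U s hs
  · calc ∑ j, eVariationOn (fun s => g s j) (Ioo 0 T)
        ≤ ∑ j, eVariationOn (fun s => g s j) S :=
          Finset.sum_le_sum fun j _ => (hg.comp fun w => w j).eVariationOn_le
      _ = ∑ j, eVariationOn (fun s => f s j) S :=
          Finset.sum_congr rfl fun j _ => eVariationOn.eq_of_eqOn fun s hs => congrFun (hgf hs) j
      _ ≤ σ := hf_var
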